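/- arXiv:1904.10302 — 2 statements merged into one kernel-verified Lean document; each statement's English description precedes it below -/
import Mathlib

section
/- A residuated lattice A is both quasicomplemented and disjunctive if and only if its underlying bounded lattice is a Boolean lattice. -/
/-- A (bounded, integral, commutative) residuated lattice. -/
class ResLattice (A : Type*) extends Lattice A, CommMonoid A, OrderBot A where
  himp : A → A → A
  adjunction : ∀ x y z : A, x * y ≤ z ↔ x ≤ himp y z
  le_one : ∀ x : A, x ≤ 1

variable {A : Type*} [ResLattice A]

/-- Coannihilator of a subset: `X^⊥ = {a | a ⊔ x = 1 for all x ∈ X}`. -/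
def Coann (X : Set A) : Set A := {a | ∀ x ∈ X, a ⊔ x = 1}

/-- Coannulet of an element: `x^⊥`. -/
def rperp (x : A) : Set A := Coann {x}

/-- The principal filter generated by `x`. -/
def PFil (x : A) : Set A := {a | ∃ n : ℕ, 0 < n ∧ x ^ n ≤ a}

/-- Filters of a residuated lattice. -/
def IsRLFilter (F : Set A) : Prop :=
  F.Nonempty ∧ (∀ x ∈ F, ∀ y ∈ F, x * y ∈ F) ∧ (∀ x ∈ F, ∀ y : A, x ⊔ y ∈ F)

/-- Prime filters. -/
def IsRLPrime (P : Set A) : Prop :=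
  IsRLFilter P ∧ P ≠ Set.univ ∧ ∀ x y : A, x ⊔ y ∈ P → x ∈ P ∨ y ∈ P

/-- Minimal prime filters. -/
def IsRLMinPrime (P : Set A) : Prop :=
  IsRLPrime P ∧ ∀ Q : Set A, IsRLPrime Q → Q ⊆ P → Q = P

/-- Quasicomplemented residuated lattice. -/
def Quasicomplemented (A : Type*) [ResLattice A] : Prop :=
  ∀ x : A, ∃ y : A, Coann (rperp x) = rperp y

/-- α-filters. -/
def IsAlphaFilter (F : Set A) : Prop :=
  IsRLFilter F ∧ ∀ x ∈ F, Coann (rperp x) ⊆ F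

/-- The α-filter generated by a subset. -/
def alphaGen (X : Set A) : Set A := ⋂₀ {G : Set A | IsAlphaFilter G ∧ X ⊆ G}

/-! Disjunctivity forces `x * y = x ⊓ y`, because both elements have the coannulet
`x^⊥ ∩ y^⊥`; the adjunction then distributes `⊓` over `⊔`, and a `y` with `x^⊥⊥ = y^⊥` is
a complement of `x`. Conversely, in a Boolean lattice `x^⊥` is the principal filter of the
complement `x'` of `x`, so `x^⊥⊥ = x'^⊥`, and `x ↦ x^⊥` is injective by uniqueness of
complements. -/

namespace ResLattice

instance : IsOrderedMonoid A where
  mul_le_mul_left a b hab c :=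
    (adjunction a c (b * c)).2 (hab.trans ((adjunction b c (b * c)).1 le_rfl))

lemma mul_le_left (a b : A) : a * b ≤ a :=
  mul_le_of_le_one_right' (le_one b)

lemma mul_le_right (a b : A) : a * b ≤ b :=
  mul_le_of_le_one_left' (le_one a)

lemma mul_sup (a b c : A) : a * (b ⊔ c) = a * b ⊔ a * c := by
  refine le_antisymm ?_
    (sup_le (mul_le_mul_right le_sup_left a) (mul_le_mul_right le_sup_right a))
  rw [mul_comm, adjunction]
  refine sup_le ((adjunction b a _).1 ?_) ((adjunction c a _).1 ?_)
  · rw [mul_comm]; exact le_sup_left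
  · rw [mul_comm]; exact le_sup_right

lemma sup_mul_sup_le (a x y : A) : (a ⊔ x) * (a ⊔ y) ≤ a ⊔ x * y := by
  rw [mul_sup, mul_comm (a ⊔ x) a, mul_comm (a ⊔ x) y, mul_sup, mul_sup]
  exact sup_le
    (sup_le (le_sup_of_le_left (mul_le_left a a)) (le_sup_of_le_left (mul_le_left a x)))
    (sup_le (le_sup_of_le_left (mul_le_right y a)) (le_sup_of_le_right (mul_comm y x).le))

lemma sup_eq_one_of_le {a x y : A} (h : a ⊔ x = 1) (hxy : x ≤ y) : a ⊔ y = 1 :=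
  (le_one _).antisymm (h ▸ sup_le_sup_left hxy a)

lemma mem_rperp {a x : A} : a ∈ rperp x ↔ a ⊔ x = 1 := by
  simp [rperp, Coann]

lemma mem_coann_rperp_self (x : A) : x ∈ Coann (rperp x) :=
  fun _ ha ↦ sup_comm x _ ▸ mem_rperp.1 ha

lemma rperp_bot : rperp (⊥ : A) = {1} := by
  ext a
  simp [mem_rperp]

lemma rperp_mono : Monotone (rperp : A → Set A) :=
  fun _ _ hxy _ ha ↦ mem_rperp.2 (sup_eq_one_of_le (mem_rperp.1 ha) hxy)

lemma rperp_mul (x y : A) : rperp (x * y) = rperp x ∩ rperp y := by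
  refine Set.Subset.antisymm
    (Set.subset_inter (rperp_mono (mul_le_left x y)) (rperp_mono (mul_le_right x y)))
    fun a ⟨hx, hy⟩ ↦ mem_rperp.2 ((le_one _).antisymm ?_)
  simpa [mem_rperp.1 hx, mem_rperp.1 hy] using sup_mul_sup_le a x y

lemma rperp_inf (x y : A) : rperp (x ⊓ y) = rperp x ∩ rperp y :=
  Set.Subset.antisymm
    (Set.subset_inter (rperp_mono inf_le_left) (rperp_mono inf_le_right))
    (rperp_mul x y ▸ rperp_mono (le_inf (mul_le_left x y) (mul_le_right x y)))

lemma coann_Ici (b : A) : Coann (Set.Ici b) = rperp b :=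
  Set.ext fun _ ↦ ⟨fun h ↦ mem_rperp.2 (h b le_rfl),
    fun h _ hba ↦ sup_eq_one_of_le (mem_rperp.1 h) hba⟩

lemma mul_eq_inf_of_injective_rperp (hinj : Function.Injective (rperp : A → Set A)) (x y : A) :
    x * y = x ⊓ y :=
  hinj (by rw [rperp_mul, rperp_inf])

lemma inf_sup_left_of_injective_rperp (hinj : Function.Injective (rperp : A → Set A))
    (x y z : A) : x ⊓ (y ⊔ z) = x ⊓ y ⊔ x ⊓ z := by
  simp only [← mul_eq_inf_of_injective_rperp hinj, mul_sup]

lemma inf_eq_bot_of_coann_rperp_eq (hinj : Function.Injective (rperp : A → Set A)) {x y : A}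
    (hy : Coann (rperp x) = rperp y) : x ⊓ y = ⊥ := by
  refine hinj (Set.Subset.antisymm (fun a ha ↦ ?_) ?_)
  · rw [rperp_inf] at ha
    have haa : a ⊔ a = 1 := (hy ▸ ha.2 : a ∈ Coann (rperp x)) a ha.1
    simpa [rperp_bot] using haa
  · simp [rperp_bot, mem_rperp, le_one]

lemma le_of_inf_eq_bot_of_sup_eq_one (hd : ∀ x y z : A, x ⊓ (y ⊔ z) = x ⊓ y ⊔ x ⊓ z) {a b c : A}
    (hab : a ⊓ b = ⊥) (hca : c ⊔ a = 1) : b ≤ c :=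
  calc b = b ⊓ (c ⊔ a) := by rw [hca, inf_eq_left.2 (le_one b)]
    _ = b ⊓ c := by rw [hd, inf_comm b a, hab, sup_bot_eq]
    _ ≤ c := inf_le_right

lemma rperp_eq_Ici (hd : ∀ x y z : A, x ⊓ (y ⊔ z) = x ⊓ y ⊔ x ⊓ z) {x b : A}
    (hinf : x ⊓ b = ⊥) (hsup : x ⊔ b = 1) : rperp x = Set.Ici b :=
  Set.ext fun _ ↦ mem_rperp.trans
    ⟨le_of_inf_eq_bot_of_sup_eq_one hd hinf,
      fun hbc ↦ sup_comm x _ ▸ sup_eq_one_of_le hsup hbc⟩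

lemma eq_of_inf_eq_bot_of_sup_eq_one (hd : ∀ x y z : A, x ⊓ (y ⊔ z) = x ⊓ y ⊔ x ⊓ z) {x y b : A}
    (hx : x ⊓ b = ⊥) (hx' : x ⊔ b = 1) (hy : y ⊓ b = ⊥) (hy' : y ⊔ b = 1) : x = y :=
  le_antisymm (le_of_inf_eq_bot_of_sup_eq_one hd (inf_comm x b ▸ hx) hy')
    (le_of_inf_eq_bot_of_sup_eq_one hd (inf_comm y b ▸ hy) hx')

end ResLattice

open ResLattice in
theorem stmt7 :
    (Quasicomplemented A ∧ Function.Injective (rperp : A → Set A)) ↔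
      ((∀ x y z : A, x ⊓ (y ⊔ z) = (x ⊓ y) ⊔ (x ⊓ z)) ∧
        ∀ a : A, ∃ b : A, a ⊓ b = ⊥ ∧ a ⊔ b = 1) := by
  constructor
  · rintro ⟨hqc, hinj⟩
    refine ⟨inf_sup_left_of_injective_rperp hinj, fun x ↦ ?_⟩
    obtain ⟨y, hy⟩ := hqc x
    exact ⟨y, inf_eq_bot_of_coann_rperp_eq hinj hy, mem_rperp.1 (hy ▸ mem_coann_rperp_self x)⟩
  · rintro ⟨hd, hc⟩
    choose c hinf hsup using hc
    have hperp (x : A) : rperp x = Set.Ici (c x) := rperp_eq_Ici hd (hinf x) (hsup x)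
    refine ⟨fun x ↦ ⟨c x, by rw [hperp, coann_Ici]⟩, fun u v huv ↦ ?_⟩
    have hcuv : c u = c v := Set.Ici_inj.1 (by rw [← hperp, ← hperp, huv])
    exact eq_of_inf_eq_bot_of_sup_eq_one hd (hinf u) (hsup u) (hcuv ▸ hinf v) (hcuv ▸ hsup v)
end

section
/- In a residuated lattice, a filter F is an α-filter if and only if for all x, y: x^⊥ = y^⊥ and x ∈ F imply y ∈ F. -/
variable {A : Type*} [ResLattice A]

theorem mem_rperp {x a : A} : a ∈ rperp x ↔ a ⊔ x = 1 := by
  simp [rperp, Coann]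

theorem rperp_mono {x y : A} (h : x ≤ y) : rperp x ⊆ rperp y := fun a ha => by
  rw [mem_rperp] at ha ⊢
  exact le_antisymm (ResLattice.le_one _) (ha ▸ sup_le_sup_left h a)

theorem mem_coann_rperp_iff {x y : A} : y ∈ Coann (rperp x) ↔ rperp x ⊆ rperp y := by
  simp only [Coann, Set.mem_ofPred_eq, mem_rperp, sup_comm y, Set.subset_def]

theorem rperp_sup_of_rperp_subset {x y : A} (h : rperp x ⊆ rperp y) :
    rperp (x ⊔ y) = rperp y := by
  refine Set.Subset.antisymm (fun a ha => ?_) (rperp_mono le_sup_right)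
  have hx : a ⊔ y ∈ rperp x := by
    rw [mem_rperp] at ha ⊢
    rwa [sup_right_comm, sup_assoc]
  simpa only [mem_rperp, sup_assoc, sup_idem] using h hx

theorem stmt12 (F : Set A) (hF : IsRLFilter F) :
    IsAlphaFilter F ↔ ∀ x y : A, rperp x = rperp y → x ∈ F → y ∈ F := by
  constructor
  · intro hα x y hxy hx
    exact hα.2 x hx (mem_coann_rperp_iff.2 hxy.subset)
  · intro h
    refine ⟨hF, fun x hx y hy => ?_⟩
    have hsup : rperp (x ⊔ y) = rperp y :=
      rperp_sup_of_rperp_subset (mem_coann_rperp_iff.1 hy)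
    exact h (x ⊔ y) y hsup (hF.2.2 x hx y)
end
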